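/- arXiv:math/0303195 — 3 statements merged into one kernel-verified Lean document; each statement's English description precedes it below -/
import Mathlib

section
/- Let Q(x,y) = -||x||² + ||y||² be a quadratic form on ℝᵏ × ℝ^(n-k), and let w be a C¹ vector field defined near (0,0) such that Q'(z)(w(z)) > 0 for every z ≠ (0,0) in a neighborhood of the origin. Then w(0,0) = 0. -/
/-! Let `v = w 0` and move towards the origin along the ray through `(v.1, -v.2)`. There the
derivative of `Q` at `t • (v.1, -v.2)` applied to `h` equals `-2t (⟪v.1, h.1⟫ + ⟪v.2, h.2⟫)`, so
positivity of `Q'(z)(w z)` forces `⟪v.1, (w z).1⟫ + ⟪v.2, (w z).2⟫ < 0` along the ray. Letting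
`t → 0⁺`, continuity of `w` gives `‖v.1‖² + ‖v.2‖² ≤ 0`, i.e. `v = 0`. -/

open scoped RealInnerProductSpace Topology
open Filter

section

variable {E F : Type*} [NormedAddCommGroup E] [InnerProductSpace ℝ E]
  [NormedAddCommGroup F] [InnerProductSpace ℝ F]

theorem fderiv_neg_normSq_fst_add_normSq_snd_apply (z h : E × F) :
    fderiv ℝ (fun z : E × F => -‖z.1‖ ^ 2 + ‖z.2‖ ^ 2) z h
      = -(2 * ⟪z.1, h.1⟫) + 2 * ⟪z.2, h.2⟫ := by
  have hQ : HasFDerivAt (fun z : E × F => -‖z.1‖ ^ 2 + ‖z.2‖ ^ 2)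
      (-(2 • (innerSL ℝ z.1).comp (ContinuousLinearMap.fst ℝ E F))
        + 2 • (innerSL ℝ z.2).comp (ContinuousLinearMap.snd ℝ E F)) z :=
    hasFDerivAt_fst.norm_sq.neg.add hasFDerivAt_snd.norm_sq
  simp [hQ.fderiv]

theorem fderiv_neg_normSq_fst_add_normSq_snd_smul_apply (a : E) (b : F) (t : ℝ) (h : E × F) :
    fderiv ℝ (fun z : E × F => -‖z.1‖ ^ 2 + ‖z.2‖ ^ 2) (t • (a, -b)) h
      = -2 * t * (⟪a, h.1⟫ + ⟪b, h.2⟫) := by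
  rw [fderiv_neg_normSq_fst_add_normSq_snd_apply]
  simp only [Prod.smul_fst, Prod.smul_snd, real_inner_smul_left, inner_neg_left]
  ring

end

theorem Prod.eq_zero_of_normSq_add_normSq_nonpos {E F : Type*} [NormedAddCommGroup E]
    [NormedAddCommGroup F] {v : E × F}
    (hv : ‖v.1‖ ^ 2 + ‖v.2‖ ^ 2 ≤ 0) : v = 0 := by
  have h1 : ‖v.1‖ = 0 := by nlinarith [norm_nonneg v.1, norm_nonneg v.2]
  have h2 : ‖v.2‖ = 0 := by nlinarith [norm_nonneg v.1, norm_nonneg v.2]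
  exact Prod.ext (norm_eq_zero.1 h1) (norm_eq_zero.1 h2)

section

variable {E : Type*} [NormedAddCommGroup E] [NormedSpace ℝ E]

theorem tendsto_smul_const_nhdsGT_zero (u : E) :
    Tendsto (fun t : ℝ => t • u) (𝓝[>] 0) (𝓝 0) :=
  ((continuous_id.smul continuous_const).tendsto' 0 0 (zero_smul ℝ u)).mono_left
    nhdsWithin_le_nhds

theorem tendsto_smul_const_nhdsGT_zero_nhdsNE_zero {u : E} (hu : u ≠ 0) :
    Tendsto (fun t : ℝ => t • u) (𝓝[>] 0) (𝓝[≠] 0) := by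
  refine tendsto_nhdsWithin_of_tendsto_nhds_of_eventually_within _
    (tendsto_smul_const_nhdsGT_zero u) ?_
  filter_upwards [self_mem_nhdsWithin] with t (ht : 0 < t)
  exact smul_ne_zero ht.ne' hu

theorem ContinuousAt.nonpos_of_eventually_nonpos_smul {g : E → ℝ} (hg : ContinuousAt g 0)
    {u : E} (h : ∀ᶠ t in 𝓝[>] (0 : ℝ), g (t • u) ≤ 0) : g 0 ≤ 0 :=
  le_of_tendsto (hg.tendsto.comp (tendsto_smul_const_nhdsGT_zero u)) h

end

/-- Let `Q(x,y) = -‖x‖² + ‖y‖²` on `ℝᵏ × ℝᵐ` (with `m = n - k`), and let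
`w` be a `C¹` vector field defined on an open neighborhood `U` of the origin such that
`Q'(z)(w z) > 0` for every `z ≠ (0,0)` in `U`. Then `w (0,0) = 0`. -/
theorem stmt0 (k m : ℕ)
    (Q : EuclideanSpace ℝ (Fin k) × EuclideanSpace ℝ (Fin m) → ℝ)
    (hQ : ∀ z : EuclideanSpace ℝ (Fin k) × EuclideanSpace ℝ (Fin m),
      Q z = -‖z.1‖ ^ 2 + ‖z.2‖ ^ 2)
    (U : Set (EuclideanSpace ℝ (Fin k) × EuclideanSpace ℝ (Fin m)))
    (hU : IsOpen U) (h0 : ((0, 0) : EuclideanSpace ℝ (Fin k) × EuclideanSpace ℝ (Fin m)) ∈ U)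
    (w : EuclideanSpace ℝ (Fin k) × EuclideanSpace ℝ (Fin m) →
      EuclideanSpace ℝ (Fin k) × EuclideanSpace ℝ (Fin m))
    (hw : ContDiffOn ℝ 1 w U)
    (hpos : ∀ z ∈ U, z ≠ ((0, 0) : EuclideanSpace ℝ (Fin k) × EuclideanSpace ℝ (Fin m)) →
      0 < fderiv ℝ Q z (w z)) :
    w (0, 0) = 0 := by
  change w 0 = 0
  set v := w 0
  by_contra hv
  set g := fun z => ⟪v.1, (w z).1⟫ + ⟪v.2, (w z).2⟫
  have hU0 : U ∈ 𝓝 0 := hU.mem_nhds h0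
  have hg : ContinuousAt g 0 :=
    ((continuous_const.inner continuous_fst).add (continuous_const.inner continuous_snd)
      ).continuousAt.comp (hw.continuousOn.continuousAt hU0)
  have hu : ((v.1, -v.2) : _ × _) ≠ 0 := by simpa [Prod.ext_iff] using hv
  have hpos' : ∀ᶠ z in 𝓝[≠] 0, 0 < fderiv ℝ Q z (w z) := by
    filter_upwards [nhdsWithin_le_nhds hU0, self_mem_nhdsWithin] with z hzU hz0
    exact hpos z hzU hz0
  have hneg : ∀ᶠ t in 𝓝[>] (0 : ℝ), g (t • (v.1, -v.2)) ≤ 0 := by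
    filter_upwards [(tendsto_smul_const_nhdsGT_zero_nhdsNE_zero hu).eventually hpos',
      self_mem_nhdsWithin] with t ht (htpos : 0 < t)
    rw [funext hQ, fderiv_neg_normSq_fst_add_normSq_snd_smul_apply] at ht
    nlinarith
  have hv_sq : ⟪v.1, v.1⟫ + ⟪v.2, v.2⟫ ≤ 0 := hg.nonpos_of_eventually_nonpos_smul hneg
  rw [real_inner_self_eq_norm_sq, real_inner_self_eq_norm_sq] at hv_sq
  exact hv (Prod.eq_zero_of_normSq_add_normSq_nonpos hv_sq)
end

section
/- Let f be a smooth function on an open set of ℝⁿ and v a smooth vector field vanishing at a point p. Define φ(x) = f'(x)(v(x)). Then the second derivative of φ at p satisfies φ''(p)(h,k) = f''(p)(v'(p)h, k) + f''(p)(v'(p)k, h) for all tangent vectors h, k. -/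
/-!
Differentiating `φ x = f' x (v x)` gives `φ' x = f'' x (·) (v x) + f' x ∘ v' x`. Each summand is a
bilinear expression in a factor that is only continuous at `p` (`f''`, resp. `v'`) and a factor
that is differentiable at `p` and vanishes there (`v`, resp. `f'`). For such products the product
rule at `p` needs no derivative of the continuous factor, which gives
`φ'' p h k = f'' p k (v' p h) + f'' p h (v' p k)`; symmetry of `f'' p` puts this in the stated form.
-/

open Asymptotics Filter Topology ContinuousLinearMap

variable {𝕜 : Type*} [NontriviallyNormedField 𝕜] {E F G H : Type*}
  [NormedAddCommGroup E] [NormedSpace 𝕜 E] [NormedAddCommGroup F] [NormedSpace 𝕜 F]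
  [NormedAddCommGroup G] [NormedSpace 𝕜 G] [NormedAddCommGroup H] [NormedSpace 𝕜 H]

theorem HasFDerivAt.clm_apply_of_continuousAt_of_eq_zero (B : F →L[𝕜] G →L[𝕜] H)
    {a : E → F} {b : E → G} {b' : E →L[𝕜] G} {p : E}
    (ha : ContinuousAt a p) (hb : HasFDerivAt b b' p) (hb0 : b p = 0) :
    HasFDerivAt (fun x => B (a x) (b x)) ((B (a p)).comp b') p := by
  -- `B (a x - a p) (b x)` is `o(1) · O(x - p)`.
  have hrem : HasFDerivAt (fun x => B (a x - a p) (b x)) (0 : E →L[𝕜] H) p := by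
    have ha' : (fun x => ‖a x - a p‖) =o[𝓝 p] (fun _ => (1 : ℝ)) :=
      ((isLittleO_one_iff ℝ).2 (tendsto_sub_nhds_zero_iff.2 ha)).norm_left
    have hb' : (fun x => ‖b x‖) =O[𝓝 p] (fun x => ‖x - p‖) := by
      simpa [hb0] using hb.isBigO_sub.norm_norm
    refine .of_isLittleO ?_
    simpa [hb0] using B.isBoundedBilinearMap.isBigO_comp.trans_isLittleO
      ((ha'.mul_isBigO hb').trans_isBigO (by simpa using (isBigO_refl (· - p) _).norm_left))
  convert ((B (a p)).hasFDerivAt.comp p hb).add hrem using 1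
  · ext x; simp
  · simp

theorem fderiv_fderiv_fderiv_apply_of_eq_zero {f : E → F} {v : E → E} {p : E}
    (hf : ContDiffAt 𝕜 2 f p) (hv : ContDiffAt 𝕜 1 v p) (hvp : v p = 0)
    (hfp : fderiv 𝕜 f p = 0) (h k : E) :
    fderiv 𝕜 (fderiv 𝕜 fun x => fderiv 𝕜 f x (v x)) p h k =
      fderiv 𝕜 (fderiv 𝕜 f) p k (fderiv 𝕜 v p h) +
        fderiv 𝕜 (fderiv 𝕜 f) p h (fderiv 𝕜 v p k) := by
  have hf' : ContDiffAt 𝕜 1 (fderiv 𝕜 f) p := hf.fderiv_right le_rfl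
  have hderiv : fderiv 𝕜 (fun x => fderiv 𝕜 f x (v x)) =ᶠ[𝓝 p] fun x =>
      (compL 𝕜 E E F).flip (fderiv 𝕜 v x) (fderiv 𝕜 f x) +
        (flipₗᵢ 𝕜 E E F : (E →L[𝕜] E →L[𝕜] F) →L[𝕜] E →L[𝕜] E →L[𝕜] F)
          (fderiv 𝕜 (fderiv 𝕜 f) x) (v x) := by
    filter_upwards [hf'.eventually (by simp), hv.eventually (by simp)] with x hfx hvx
    exact fderiv_clm_apply (hfx.differentiableAt one_ne_zero) (hvx.differentiableAt one_ne_zero)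
  have hcomp := HasFDerivAt.clm_apply_of_continuousAt_of_eq_zero (compL 𝕜 E E F).flip
    (hv.continuousAt_fderiv one_ne_zero) (hf'.differentiableAt one_ne_zero).hasFDerivAt hfp
  have hflip := HasFDerivAt.clm_apply_of_continuousAt_of_eq_zero
    (flipₗᵢ 𝕜 E E F : (E →L[𝕜] E →L[𝕜] F) →L[𝕜] E →L[𝕜] E →L[𝕜] F)
    (hf'.continuousAt_fderiv one_ne_zero) (hv.differentiableAt one_ne_zero).hasFDerivAt hvp
  rw [((hcomp.add hflip).congr_of_eventuallyEq hderiv).fderiv]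
  simp [add_comm]

/-- If `f` is C², `v` is a C¹ vector field with `v p = 0`, `p` a critical point
of `f`, and `φ x = f'(x)(v x)`, then `φ''(p)(h,k) = f''(p)(v'(p)h, k) + f''(p)(v'(p)k, h)`. -/
theorem stmt1 (n : ℕ) (f : EuclideanSpace ℝ (Fin n) → ℝ)
    (v : EuclideanSpace ℝ (Fin n) → EuclideanSpace ℝ (Fin n))
    (p : EuclideanSpace ℝ (Fin n))
    (hf : ContDiff ℝ 2 f) (hv : ContDiff ℝ 1 v)
    (hvp : v p = 0) (hfp : fderiv ℝ f p = 0) :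
    ∀ h k : EuclideanSpace ℝ (Fin n),
      fderiv ℝ (fderiv ℝ (fun x => fderiv ℝ f x (v x))) p h k =
        fderiv ℝ (fderiv ℝ f) p (fderiv ℝ v p h) k +
          fderiv ℝ (fderiv ℝ f) p (fderiv ℝ v p k) h := by
  intro h k
  have hsymm : IsSymmSndFDerivAt ℝ f p := hf.contDiffAt.isSymmSndFDerivAt (by simp)
  rw [fderiv_fderiv_fderiv_apply_of_eq_zero hf.contDiffAt hv.contDiffAt hvp hfp, hsymm k, hsymm h]
end

section
/- Let A be a Morse matrix condition: suppose B is a symmetric nondegenerate n×n real matrix and L is an n×n real matrix such that ⟨B·L·h, h⟩ > 0 for all nonzero h ∈ ℝⁿ. Then L has no purely imaginary eigenvalues and no zero eigenvalue (L is a hyperbolic matrix). -/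
/-! If `v` is a complex eigenvector of `L` for `μ`, then `v* (B L) v = μ · v* B v`, and `v* B v`
is real because `B` is symmetric. The real part of `v* (B L) v` is the sum of the real quadratic
forms of `B L` at `Re v` and `Im v`, hence positive, so `Re μ · v* B v > 0`. -/

open Matrix

namespace Matrix

variable {ι : Type*} [Fintype ι]

theorem re_star_dotProduct_map_ofReal_mulVec (M : Matrix ι ι ℝ) (v : ι → ℂ) :
    (star v ⬝ᵥ M.map (↑) *ᵥ v).re =
      (fun i => (v i).re) ⬝ᵥ M *ᵥ (fun i => (v i).re) +
        (fun i => (v i).im) ⬝ᵥ M *ᵥ (fun i => (v i).im) := by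
  simp only [dotProduct, mulVec, Complex.re_sum, Finset.mul_sum, ← Finset.sum_add_distrib]
  refine Finset.sum_congr rfl fun i _ => Finset.sum_congr rfl fun j _ => ?_
  simp

theorem re_star_dotProduct_map_ofReal_mulVec_pos {M : Matrix ι ι ℝ}
    (hM : ∀ x : ι → ℝ, x ≠ 0 → 0 < x ⬝ᵥ M *ᵥ x) {v : ι → ℂ} (hv : v ≠ 0) :
    0 < (star v ⬝ᵥ M.map (↑) *ᵥ v).re := by
  have hM' (x : ι → ℝ) : 0 ≤ x ⬝ᵥ M *ᵥ x := by
    rcases eq_or_ne x 0 with rfl | hx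
    · simp
    · exact (hM x hx).le
  rw [re_star_dotProduct_map_ofReal_mulVec]
  by_cases hre : (fun i => (v i).re) = 0
  · have him : (fun i => (v i).im) ≠ 0 := fun him =>
      hv <| funext fun i => Complex.ext (congrFun hre i) (congrFun him i)
    linarith [hM _ him, hM' fun i => (v i).re]
  · linarith [hM _ hre, hM' fun i => (v i).im]

theorem IsSymm.im_star_dotProduct_map_ofReal_mulVec {B : Matrix ι ι ℝ} (hB : B.IsSymm)
    (v : ι → ℂ) : (star v ⬝ᵥ B.map (↑) *ᵥ v).im = 0 :=
  ((isHermitian_iff_isSelfAdjoint.mpr hB).map _ fun _ => by simp)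
    |>.im_star_dotProduct_mulVec_self v

end Matrix

theorem stmt8_general (n : ℕ) (B L : Matrix (Fin n) (Fin n) ℝ)
    (hB : B.IsSymm)
    (hpos : ∀ h : Fin n → ℝ, h ≠ 0 → 0 < dotProduct ((B * L).mulVec h) h)
    (μ : ℂ)
    (hμ : Module.End.HasEigenvalue (Matrix.toLin' (L.map (algebraMap ℝ ℂ))) μ) :
    μ.re ≠ 0 := by
  obtain ⟨v, hv⟩ := hμ.exists_hasEigenvector
  have hLv : L.map (↑) *ᵥ v = μ • v := by
    rw [← toLin'_apply]
    exact hv.apply_eq_smul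
  have hquad : star v ⬝ᵥ (B * L).map (↑) *ᵥ v = μ * (star v ⬝ᵥ B.map (↑) *ᵥ v) := by
    rw [show (B * L).map ((↑) : ℝ → ℂ) = B.map (↑) * L.map (↑) from
      Matrix.map_mul (f := Complex.ofRealHom), ← mulVec_mulVec, hLv, mulVec_smul,
      dotProduct_smul, smul_eq_mul]
  have hre_pos : 0 < (star v ⬝ᵥ (B * L).map (↑) *ᵥ v).re :=
    re_star_dotProduct_map_ofReal_mulVec_pos
      (fun x hx => by rw [dotProduct_comm]; exact hpos x hx) hv.2
  rw [hquad, Complex.mul_re, hB.im_star_dotProduct_map_ofReal_mulVec, mul_zero, sub_zero]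
    at hre_pos
  exact left_ne_zero_of_mul hre_pos.ne'

/-- If `B` is a symmetric nondegenerate real matrix and `L` satisfies
`⟨B L h, h⟩ > 0` for all `h ≠ 0`, then `L` is hyperbolic: every complex eigenvalue `μ`
of `L` has `Re μ ≠ 0` (in particular no purely imaginary and no zero eigenvalues). -/
theorem stmt8 (n : ℕ) (B L : Matrix (Fin n) (Fin n) ℝ)
    (hB : B.IsSymm) (hBinv : IsUnit B.det)
    (hpos : ∀ h : Fin n → ℝ, h ≠ 0 → 0 < dotProduct ((B * L).mulVec h) h)
    (μ : ℂ)
    (hμ : Module.End.HasEigenvalue (Matrix.toLin' (L.map (algebraMap ℝ ℂ))) μ) :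
    μ.re ≠ 0 :=
  stmt8_general n B L hB hpos μ hμ
end
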